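/- arXiv:2605.20750 — 4 statements merged into one kernel-verified Lean document; each statement's English description precedes it below -/
import Mathlib

section
/- Let K and K' be nonempty compact convex sets. Suppose there exists a bijection α : ∂_e K → ∂_e K' such that: for every f ∈ A_c(K) there exists F ∈ A_c(K') with F(ψ') = 1 / f(α^{-1}(ψ')) for all ψ' ∈ ∂_e K', and for every g ∈ A_c(K') there exists G ∈ A_c(K) with G(ψ) = 1 / g(α(ψ)) for all ψ ∈ ∂_e K. Then there exists a gauge-reversing bijection Φ : A_c(K) → A_c(K') with Φ(1_K) = 1_{K'} satisfying Φ(f)(ψ') = 1 / f(α^{-1}(ψ')) for every f ∈ A_c(K) and every ψ' ∈ ∂_e K'. -/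
/-! By Krein–Milman, `{f ≤ g}` is a closed convex subset of `K` containing `∂ₑK` as soon as `f ≤ g`
on `∂ₑK`, so it is all of `K`: order relations (and equality) between continuous affine functions
are decided on extreme points. Hence `Φ f ∈ A_c(K')`, the function equal to `1 / f ∘ α⁻¹` on
`∂ₑK'`, is injective in `f`, surjective by the second hypothesis, and `λ • Φ g ≤ Φ f` reduces on
extreme points to `λ • f ≤ g`, which is gauge reversal. -/

open Set

noncomputable section

/-- `f : K → ℝ` is affine on `K`. -/
def IsAffineOn {E : Type*} [AddCommGroup E] [Module ℝ E] (K : Set E) (f : K → ℝ) : Prop :=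
  ∀ (x y : K) (t : ℝ), 0 ≤ t → t ≤ 1 →
    ∀ h : t • (x : E) + (1 - t) • (y : E) ∈ K,
      f ⟨t • (x : E) + (1 - t) • (y : E), h⟩ = t * f x + (1 - t) * f y

/-- Membership in `A_c(K)`: continuous, affine and strictly positive functions on `K`. -/
def MemAc {E : Type*} [AddCommGroup E] [Module ℝ E] [TopologicalSpace E]
    (K : Set E) (f : K → ℝ) : Prop :=
  Continuous f ∧ IsAffineOn K f ∧ ∀ x : K, 0 < f x

/-- The gauge `m(f,g) = sup {λ > 0 : λ·g ≤ f}`. -/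
def gaugem {E : Type*} [AddCommGroup E] [Module ℝ E] {K : Set E} (f g : K → ℝ) : ℝ :=
  sSup {l : ℝ | 0 < l ∧ ∀ x : K, l * g x ≤ f x}

section Affine

variable {E : Type*} [AddCommGroup E] [Module ℝ E] {K : Set E} {f g : K → ℝ}

theorem IsAffineOn.const_mul (hf : IsAffineOn K f) (c : ℝ) : IsAffineOn K (fun x => c * f x) := by
  intro x y t ht₀ ht₁ h
  simp only [hf x y t ht₀ ht₁ h]
  ring

theorem IsAffineOn.convex_image_val_setOf_le (hK : Convex ℝ K) (hf : IsAffineOn K f)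
    (hg : IsAffineOn K g) : Convex ℝ (Subtype.val '' {x : K | f x ≤ g x}) := by
  rintro _ ⟨x, hx, rfl⟩ _ ⟨y, hy, rfl⟩ t s ht hs hts
  obtain rfl : s = 1 - t := by linarith
  have hmem : t • (x : E) + (1 - t) • (y : E) ∈ K := hK x.2 y.2 ht hs hts
  refine ⟨⟨_, hmem⟩, ?_, rfl⟩
  show f _ ≤ g _
  rw [hf x y t ht (by linarith) hmem, hg x y t ht (by linarith) hmem]
  gcongr <;> assumption

theorem gaugem_congr {E' : Type*} [AddCommGroup E'] [Module ℝ E'] {K' : Set E'}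
    {f' g' : K' → ℝ}
    (h : ∀ l : ℝ, 0 < l → ((∀ x, l * g x ≤ f x) ↔ ∀ y, l * g' y ≤ f' y)) :
    gaugem f g = gaugem f' g' := by
  unfold gaugem
  congr 1
  ext l
  exact and_congr_right (h l)

end Affine

section KreinMilman

variable {E : Type*} [AddCommGroup E] [Module ℝ E] [TopologicalSpace E] [T2Space E]
  [IsTopologicalAddGroup E] [ContinuousSMul ℝ E] [LocallyConvexSpace ℝ E]
  {K : Set E} {f g : K → ℝ}

theorem le_of_le_on_extremePoints (hKcp : IsCompact K) (hKcv : Convex ℝ K)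
    (hf : Continuous f) (hfa : IsAffineOn K f) (hg : Continuous g) (hga : IsAffineOn K g)
    (h : ∀ ψ : K.extremePoints ℝ,
      f (inclusion extremePoints_subset ψ) ≤ g (inclusion extremePoints_subset ψ)) (x : K) :
    f x ≤ g x := by
  have : CompactSpace K := isCompact_iff_compactSpace.mp hKcp
  have hclosed : IsClosed (Subtype.val '' {x : K | f x ≤ g x}) :=
    ((isClosed_le hf hg).isCompact.image continuous_subtype_val).isClosed
  have hsub : K ⊆ Subtype.val '' {x : K | f x ≤ g x} := by
    refine (closure_convexHull_extremePoints hKcp hKcv).superset.trans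
      (closure_minimal (convexHull_min ?_ (hfa.convex_image_val_setOf_le hKcv hga)) hclosed)
    exact fun ψ hψ => ⟨_, h ⟨ψ, hψ⟩, rfl⟩
  obtain ⟨y, hy, hyx⟩ := hsub x.2
  rwa [← Subtype.ext hyx]

theorem MemAc.eq_of_eqOn_extremePoints (hKcp : IsCompact K) (hKcv : Convex ℝ K)
    (hf : MemAc K f) (hg : MemAc K g)
    (h : ∀ ψ : K.extremePoints ℝ,
      f (inclusion extremePoints_subset ψ) = g (inclusion extremePoints_subset ψ)) :
    f = g :=
  funext fun x => le_antisymm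
    (le_of_le_on_extremePoints hKcp hKcv hf.1 hf.2.1 hg.1 hg.2.1 (fun ψ => (h ψ).le) x)
    (le_of_le_on_extremePoints hKcp hKcv hg.1 hg.2.1 hf.1 hf.2.1 (fun ψ => (h ψ).ge) x)

theorem MemAc.forall_const_mul_le_iff_extremePoints (hKcp : IsCompact K) (hKcv : Convex ℝ K)
    (hf : MemAc K f) (hg : MemAc K g) (l : ℝ) :
    (∀ x, l * g x ≤ f x) ↔ ∀ ψ : K.extremePoints ℝ,
      l * g (inclusion extremePoints_subset ψ) ≤ f (inclusion extremePoints_subset ψ) :=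
  ⟨fun h _ => h _, le_of_le_on_extremePoints hKcp hKcv (continuous_const.mul hg.1)
    (hg.2.1.const_mul l) hf.1 hf.2.1⟩

end KreinMilman

theorem const_mul_one_div_le_one_div_iff {a b : ℝ} (ha : 0 < a) (hb : 0 < b) (l : ℝ) :
    l * (1 / b) ≤ 1 / a ↔ l * a ≤ b := by
  rw [mul_one_div, div_le_div_iff₀ hb ha, one_mul]

theorem statement1_general
    {E E' : Type*}
    [AddCommGroup E] [Module ℝ E] [TopologicalSpace E] [IsTopologicalAddGroup E]
    [ContinuousSMul ℝ E] [T2Space E] [LocallyConvexSpace ℝ E]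
    [AddCommGroup E'] [Module ℝ E'] [TopologicalSpace E'] [IsTopologicalAddGroup E']
    [ContinuousSMul ℝ E'] [T2Space E'] [LocallyConvexSpace ℝ E']
    (K : Set E) (K' : Set E')
    (hKcp : IsCompact K) (hKcv : Convex ℝ K)
    (hK'cp : IsCompact K') (hK'cv : Convex ℝ K')
    (α : (K.extremePoints ℝ) ≃ (K'.extremePoints ℝ))
    (hext : ∀ f : {f : K → ℝ // MemAc K f}, ∃ F : {F : K' → ℝ // MemAc K' F},
      ∀ ψ' : K'.extremePoints ℝ,
        F.1 ⟨(ψ' : E'), extremePoints_subset ψ'.2⟩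
          = 1 / f.1 ⟨(α.symm ψ' : E), extremePoints_subset (α.symm ψ').2⟩)
    (hext' : ∀ g : {g : K' → ℝ // MemAc K' g}, ∃ G : {G : K → ℝ // MemAc K G},
      ∀ ψ : K.extremePoints ℝ,
        G.1 ⟨(ψ : E), extremePoints_subset ψ.2⟩
          = 1 / g.1 ⟨(α ψ : E'), extremePoints_subset (α ψ).2⟩) :
    ∃ Φ : {f : K → ℝ // MemAc K f} → {g : K' → ℝ // MemAc K' g},
      Function.Bijective Φ ∧
      (∀ f g : {f : K → ℝ // MemAc K f},
        gaugem (Φ f).1 (Φ g).1 = gaugem g.1 f.1) ∧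
      (∀ (h1 : MemAc K (fun _ => (1 : ℝ))) (h1' : MemAc K' (fun _ => (1 : ℝ))),
        Φ ⟨fun _ => 1, h1⟩ = ⟨fun _ => 1, h1'⟩) ∧
      (∀ (f : {f : K → ℝ // MemAc K f}) (ψ' : K'.extremePoints ℝ),
        (Φ f).1 ⟨(ψ' : E'), extremePoints_subset ψ'.2⟩
          = 1 / f.1 ⟨(α.symm ψ' : E), extremePoints_subset (α.symm ψ').2⟩) := by
  choose Φ hΦ using hext
  have hΦα : ∀ f ψ, (Φ f).1 (inclusion extremePoints_subset (α ψ))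
      = 1 / f.1 (inclusion extremePoints_subset ψ) := fun f ψ => by
    simpa using hΦ f (α ψ)
  refine ⟨Φ, ⟨fun f g hfg => ?_, fun g => ?_⟩, fun f g => ?_, fun h1 h1' => ?_, hΦ⟩
  · refine Subtype.ext (f.2.eq_of_eqOn_extremePoints hKcp hKcv g.2 fun ψ => ?_)
    simpa [hfg, hΦα g ψ] using (hΦα f ψ).symm
  · obtain ⟨G, hG⟩ := hext' g
    refine ⟨G, Subtype.ext ((Φ G).2.eq_of_eqOn_extremePoints hK'cp hK'cv g.2 fun ψ' => ?_)⟩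
    simpa using (hΦ G ψ').trans (congrArg (1 / ·) (hG (α.symm ψ')))
  · refine gaugem_congr fun l _ => ?_
    rw [(Φ f).2.forall_const_mul_le_iff_extremePoints hK'cp hK'cv (Φ g).2,
      g.2.forall_const_mul_le_iff_extremePoints hKcp hKcv f.2, ← α.forall_congr_right]
    simp only [hΦα]
    exact forall_congr' fun ψ => const_mul_one_div_le_one_div_iff (f.2.2.2 _) (g.2.2.2 _) l
  · refine Subtype.ext ((Φ _).2.eq_of_eqOn_extremePoints hK'cp hK'cv h1' fun ψ' => ?_)
    simpa using hΦ ⟨_, h1⟩ ψ'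

theorem statement1
    {E E' : Type*}
    [AddCommGroup E] [Module ℝ E] [TopologicalSpace E] [IsTopologicalAddGroup E]
    [ContinuousSMul ℝ E] [T2Space E] [LocallyConvexSpace ℝ E]
    [AddCommGroup E'] [Module ℝ E'] [TopologicalSpace E'] [IsTopologicalAddGroup E']
    [ContinuousSMul ℝ E'] [T2Space E'] [LocallyConvexSpace ℝ E']
    (K : Set E) (K' : Set E')
    (hKne : K.Nonempty) (hKcp : IsCompact K) (hKcv : Convex ℝ K)
    (hK'ne : K'.Nonempty) (hK'cp : IsCompact K') (hK'cv : Convex ℝ K')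
    (α : (K.extremePoints ℝ) ≃ (K'.extremePoints ℝ))
    (hext : ∀ f : {f : K → ℝ // MemAc K f}, ∃ F : {F : K' → ℝ // MemAc K' F},
      ∀ ψ' : K'.extremePoints ℝ,
        F.1 ⟨(ψ' : E'), extremePoints_subset ψ'.2⟩
          = 1 / f.1 ⟨(α.symm ψ' : E), extremePoints_subset (α.symm ψ').2⟩)
    (hext' : ∀ g : {g : K' → ℝ // MemAc K' g}, ∃ G : {G : K → ℝ // MemAc K G},
      ∀ ψ : K.extremePoints ℝ,
        G.1 ⟨(ψ : E), extremePoints_subset ψ.2⟩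
          = 1 / g.1 ⟨(α ψ : E'), extremePoints_subset (α ψ).2⟩) :
    ∃ Φ : {f : K → ℝ // MemAc K f} → {g : K' → ℝ // MemAc K' g},
      Function.Bijective Φ ∧
      (∀ f g : {f : K → ℝ // MemAc K f},
        gaugem (Φ f).1 (Φ g).1 = gaugem g.1 f.1) ∧
      (∀ (h1 : MemAc K (fun _ => (1 : ℝ))) (h1' : MemAc K' (fun _ => (1 : ℝ))),
        Φ ⟨fun _ => 1, h1⟩ = ⟨fun _ => 1, h1'⟩) ∧
      (∀ (f : {f : K → ℝ // MemAc K f}) (ψ' : K'.extremePoints ℝ),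
        (Φ f).1 ⟨(ψ' : E'), extremePoints_subset ψ'.2⟩
          = 1 / f.1 ⟨(α.symm ψ' : E), extremePoints_subset (α.symm ψ').2⟩) :=
  statement1_general K K' hKcp hKcv hK'cp hK'cv α hext hext'
end
end

section
/- Let K be a nonempty compact convex set and ψ ∈ ∂_e K. Then p_ψ(ψ) = 1, and p_ψ(ρ) = 0 for every ρ ∈ ∂_e K with ρ ≠ ψ, where p_ψ(x) = inf{h(x) : h ∈ A_usc(K), h(ψ) = 1}. -/
/-!
For an extreme point `ρ ≠ ψ` and `0 < δ < 1`, the point `ρ` is not in the shrunken copy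
`(1 - δ) K + δ ψ` of `K`, since it would then lie inside a segment of `K` ending at `ψ`.
Separating `ρ` from this compact convex set by a continuous functional `f` gives
`(1 - δ) M + δ f(ψ) < f(ρ)` for `M = max_K f`, so the continuous affine function
`(M - f) / (M - f(ψ)) ≥ 0` equals `1` at `ψ` and is smaller than `δ` at `ρ`.
-/

open Set

noncomputable section

/-- Membership in `A_usc(K)`: upper semicontinuous affine functions `K → [0,∞)`. -/
def MemAusc {E : Type*} [AddCommGroup E] [Module ℝ E] [TopologicalSpace E]
    (K : Set E) (f : K → ℝ) : Prop :=
  UpperSemicontinuous f ∧ IsAffineOn K f ∧ ∀ x : K, 0 ≤ f x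

/-- `p_ψ(x) = inf {h(x) : h ∈ A_usc(K), h(ψ) = 1}`. -/
def pPsi {E : Type*} [AddCommGroup E] [Module ℝ E] [TopologicalSpace E]
    (K : Set E) (ψ : E) (hψ : ψ ∈ K) (x : K) : ℝ :=
  sInf {r : ℝ | ∃ h : K → ℝ, MemAusc K h ∧ h ⟨ψ, hψ⟩ = 1 ∧ h x = r}

section Ausc

variable {E : Type*} [AddCommGroup E] [Module ℝ E] [TopologicalSpace E] {K : Set E}

lemma memAusc_one (K : Set E) : MemAusc K fun _ => 1 :=
  ⟨continuous_const.upperSemicontinuous, fun _ _ _ _ _ _ => by ring, fun _ => zero_le_one⟩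

lemma memAusc_sub_div (f : E →L[ℝ] ℝ) {M c : ℝ}
    (hM : ∀ x ∈ K, f x ≤ M) (hc : 0 ≤ c) : MemAusc K fun x => (M - f x) / c := by
  refine ⟨Continuous.upperSemicontinuous (by fun_prop), fun x y t _ _ _ => ?_,
    fun x => div_nonneg (sub_nonneg.2 (hM x x.2)) hc⟩
  simp only [map_add, map_smul, smul_eq_mul]
  ring

lemma pPsi_self {ψ : E} (hψ : ψ ∈ K) : pPsi K ψ hψ ⟨ψ, hψ⟩ = 1 := by
  have hval : {r : ℝ | ∃ h : K → ℝ, MemAusc K h ∧ h ⟨ψ, hψ⟩ = 1 ∧ h ⟨ψ, hψ⟩ = r} = {1} := by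
    ext r
    constructor
    · rintro ⟨h, -, h1, rfl⟩
      exact h1
    · rintro rfl
      exact ⟨fun _ => 1, memAusc_one K, rfl, rfl⟩
  rw [pPsi, hval, csInf_singleton]

lemma pPsi_eq_zero_of_forall_exists_lt {ψ : E} (hψ : ψ ∈ K) (x : K)
    (hsmall : ∀ δ : ℝ, 0 < δ → δ < 1 → ∃ h : K → ℝ, MemAusc K h ∧ h ⟨ψ, hψ⟩ = 1 ∧ h x < δ) :
    pPsi K ψ hψ x = 0 := by
  have hnonneg : ∀ r ∈ {r : ℝ | ∃ h : K → ℝ, MemAusc K h ∧ h ⟨ψ, hψ⟩ = 1 ∧ h x = r}, 0 ≤ r := by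
    rintro r ⟨h, hh, -, rfl⟩
    exact hh.2.2 x
  refine le_antisymm (not_lt.1 fun hpos => ?_) (Real.sInf_nonneg hnonneg)
  obtain ⟨δ, hδ0, hδ⟩ := exists_between (lt_min hpos one_pos)
  obtain ⟨h, hh, h1, hlt⟩ := hsmall δ hδ0 (hδ.trans_le (min_le_right _ _))
  have hle : pPsi K ψ hψ x ≤ h x := csInf_le ⟨0, hnonneg⟩ ⟨h, hh, h1, rfl⟩
  linarith [min_le_left (pPsi K ψ hψ x) 1]

end Ausc

lemma notMem_homothety_image_of_mem_extremePoints {E : Type*} [AddCommGroup E] [Module ℝ E]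
    {K : Set E} {ψ ρ : E} {δ : ℝ} (hψ : ψ ∈ K)
    (hρ : ρ ∈ K.extremePoints ℝ) (hne : ρ ≠ ψ) (hδ0 : 0 < δ) (hδ1 : δ < 1) :
    ρ ∉ AffineMap.homothety ψ (1 - δ) '' K := by
  rintro ⟨x, hx, hxρ⟩
  have hseg : ρ ∈ openSegment ℝ x ψ := by
    refine ⟨1 - δ, δ, sub_pos.2 hδ1, hδ0, by ring, ?_⟩
    rw [← hxρ, AffineMap.homothety_apply, vsub_eq_sub, vadd_eq_add]
    module
  exact hne ((mem_extremePoints.1 hρ).2 x hx ψ hψ hseg).2.symm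

section Separation

variable {E : Type*} [AddCommGroup E] [Module ℝ E] [TopologicalSpace E]
  [IsTopologicalAddGroup E] [ContinuousSMul ℝ E] [T2Space E] [LocallyConvexSpace ℝ E]
  {K : Set E} {ψ ρ : E} {δ : ℝ}

lemma exists_clm_lt_of_mem_extremePoints (hKcp : IsCompact K) (hKcv : Convex ℝ K)
    (hψ : ψ ∈ K) (hρ : ρ ∈ K.extremePoints ℝ) (hne : ρ ≠ ψ) (hδ0 : 0 < δ) (hδ1 : δ < 1) :
    ∃ f : E →L[ℝ] ℝ, ∀ x ∈ K, (1 - δ) * f x + δ * f ψ < f ρ := by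
  set g := AffineMap.homothety ψ (1 - δ)
  have hcl : IsClosed (g '' K) :=
    (hKcp.image (AffineMap.homothety_continuous ψ (1 - δ))).isClosed
  obtain ⟨f, u, hfu, hu⟩ := geometric_hahn_banach_closed_point (hKcv.affine_image g) hcl
    (notMem_homothety_image_of_mem_extremePoints hψ hρ hne hδ0 hδ1)
  refine ⟨f, fun x hx => ?_⟩
  have hgx : f (g x) = (1 - δ) * f x + δ * f ψ := by
    simp only [g, AffineMap.homothety_apply, vsub_eq_sub, vadd_eq_add, map_add, map_smul,
      map_sub, smul_eq_mul]
    ring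
  linarith [hfu (g x) (mem_image_of_mem g hx)]

lemma exists_memAusc_lt_of_mem_extremePoints (hKcp : IsCompact K) (hKcv : Convex ℝ K)
    (hψ : ψ ∈ K) (hρ : ρ ∈ K.extremePoints ℝ) (hne : ρ ≠ ψ) (hδ0 : 0 < δ) (hδ1 : δ < 1) :
    ∃ h : K → ℝ, MemAusc K h ∧ h ⟨ψ, hψ⟩ = 1 ∧ h ⟨ρ, extremePoints_subset hρ⟩ < δ := by
  obtain ⟨f, hf⟩ := exists_clm_lt_of_mem_extremePoints hKcp hKcv hψ hρ hne hδ0 hδ1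
  obtain ⟨z, hz, hmax⟩ := hKcp.exists_isMaxOn ⟨ψ, hψ⟩ f.continuous.continuousOn
  have hM : ∀ x ∈ K, f x ≤ f z := fun x hx => hmax hx
  have hfz := hf z hz
  have hψρ : f ψ < f ρ := by linarith [hf ψ hψ]
  have hden : 0 < f z - f ψ := by linarith [hM ρ (extremePoints_subset hρ)]
  refine ⟨fun x => (f z - f x) / (f z - f ψ), memAusc_sub_div f hM hden.le,
    div_self hden.ne', ?_⟩
  rw [div_lt_iff₀ hden]
  linarith

end Separation

theorem statement8_general
    {E : Type*}
    [AddCommGroup E] [Module ℝ E] [TopologicalSpace E] [IsTopologicalAddGroup E]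
    [ContinuousSMul ℝ E] [T2Space E] [LocallyConvexSpace ℝ E]
    (K : Set E) (hKcp : IsCompact K) (hKcv : Convex ℝ K)
    (ψ : E) (hψ : ψ ∈ K.extremePoints ℝ) :
    pPsi K ψ (extremePoints_subset hψ) ⟨ψ, extremePoints_subset hψ⟩ = 1 ∧
    ∀ (ρ : E) (hρ : ρ ∈ K.extremePoints ℝ), ρ ≠ ψ →
      pPsi K ψ (extremePoints_subset hψ) ⟨ρ, extremePoints_subset hρ⟩ = 0 := by
  refine ⟨pPsi_self _, fun ρ hρ hne => pPsi_eq_zero_of_forall_exists_lt _ _ fun δ hδ0 hδ1 =>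
    exists_memAusc_lt_of_mem_extremePoints hKcp hKcv _ hρ hne hδ0 hδ1⟩

theorem statement8
    {E : Type*}
    [AddCommGroup E] [Module ℝ E] [TopologicalSpace E] [IsTopologicalAddGroup E]
    [ContinuousSMul ℝ E] [T2Space E] [LocallyConvexSpace ℝ E]
    (K : Set E) (hKne : K.Nonempty) (hKcp : IsCompact K) (hKcv : Convex ℝ K)
    (ψ : E) (hψ : ψ ∈ K.extremePoints ℝ) :
    pPsi K ψ (extremePoints_subset hψ) ⟨ψ, extremePoints_subset hψ⟩ = 1 ∧
    ∀ (ρ : E) (hρ : ρ ∈ K.extremePoints ℝ), ρ ≠ ψ →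
      pPsi K ψ (extremePoints_subset hψ) ⟨ρ, extremePoints_subset hρ⟩ = 0 :=
  statement8_general K hKcp hKcv ψ hψ
end
end

section
/- Let K be a nonempty compact convex set and let h, h' ∈ A_usc(K). If h(ψ) ≤ h'(ψ) for every ψ ∈ ∂_e K, then h(x) ≤ h'(x) for every x ∈ K. -/
open Set

noncomputable section

/-!
Bauer's maximum principle: the maximum of an upper semicontinuous affine function on a compact
set `K` is attained on a closed extreme subset of `K`, which by Krein–Milman contains an extreme
point of `K`. It cannot be applied to `h - h'` directly, as this need not be upper
semicontinuous. Instead, given `x₀` and `r > h'(x₀)`, separating `(x₀, r)` from the closed convex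
hypograph of `h'` yields a continuous affine `a ≥ h'` with `a(x₀) < r`; the principle applied to
`h - a` gives `h(x₀) ≤ a(x₀) < r`.
-/

namespace IsAffineOn

variable {E : Type*} [AddCommGroup E] [Module ℝ E] {K : Set E}

theorem sub_dual_add_const [TopologicalSpace E] {g : K → ℝ} (hg : IsAffineOn K g)
    (φ : StrongDual ℝ E) (c : ℝ) : IsAffineOn K fun x => g x - (φ x + c) := by
  intro x y t ht₀ ht₁ hmem
  simp only [hg x y t ht₀ ht₁ hmem, map_add, map_smul, smul_eq_mul]
  ring

theorem isExtreme_image_preimage_Ici {g : K → ℝ} (hg : IsAffineOn K g) {M : ℝ}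
    (hM : ∀ x, g x ≤ M) : IsExtreme ℝ K (Subtype.val '' (g ⁻¹' Ici M)) := by
  refine ⟨image_subset_iff.2 fun x _ => x.2, ?_⟩
  rintro x₁ hx₁ x₂ hx₂ _ ⟨x, hxM, rfl⟩ ⟨a, b, ha, hb, hab, hx⟩
  obtain rfl : b = 1 - a := by linarith
  have hmem : a • x₁ + (1 - a) • x₂ ∈ K := hx ▸ x.2
  have hsplit := hg ⟨x₁, hx₁⟩ ⟨x₂, hx₂⟩ a ha.le (by linarith) hmem
  have hx' : g ⟨a • x₁ + (1 - a) • x₂, hmem⟩ = g x := congrArg g (Subtype.ext hx)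
  have hxM : M ≤ g x := hxM
  have h₂ := hM ⟨x₂, hx₂⟩
  refine ⟨⟨x₁, hx₁⟩, ?_, rfl⟩
  change M ≤ g ⟨x₁, hx₁⟩
  nlinarith

variable [TopologicalSpace E] [IsTopologicalAddGroup E] [ContinuousSMul ℝ E]
  [LocallyConvexSpace ℝ E]

theorem exists_dual_add_const_majorant_lt (hKcl : IsClosed K) (hKcv : Convex ℝ K) {g : K → ℝ}
    (hg : IsAffineOn K g) (husc : UpperSemicontinuous g) (x₀ : K) {r : ℝ} (hr : g x₀ < r) :
    ∃ (φ : StrongDual ℝ E) (c : ℝ), (∀ x : K, g x ≤ φ x + c) ∧ φ x₀ + c < r := by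
  set H : Set (E × ℝ) := Prod.map Subtype.val id '' {p : K × ℝ | p.2 ≤ g p.1}
  have hHcl : IsClosed H :=
    (hKcl.isClosedEmbedding_subtypeVal.prodMap Topology.IsClosedEmbedding.id).isClosedMap _
      husc.IsClosed_hypograph
  have hHcv : Convex ℝ H := by
    rintro _ ⟨⟨x₁, t₁⟩, h₁, rfl⟩ _ ⟨⟨x₂, t₂⟩, h₂, rfl⟩ a b ha hb hab
    obtain rfl : b = 1 - a := by linarith
    have hmem : a • (x₁ : E) + (1 - a) • (x₂ : E) ∈ K := hKcv x₁.2 x₂.2 ha hb hab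
    refine ⟨(⟨_, hmem⟩, a * t₁ + (1 - a) * t₂), ?_, rfl⟩
    change a * t₁ + (1 - a) * t₂ ≤ g ⟨_, hmem⟩
    rw [hg x₁ x₂ a ha (by linarith) hmem]
    gcongr
    exacts [h₁, h₂]
  have hout : ((x₀ : E), r) ∉ H := by
    rintro ⟨⟨x, t⟩, hxt, hx⟩
    simp only [Prod.map, Prod.mk.injEq, id] at hx
    obtain ⟨rfl, rfl⟩ := And.intro (Subtype.ext hx.1 : x = x₀) hx.2
    exact (not_le.2 hr) (by simpa using hxt)
  obtain ⟨f, u, hfr, hfH⟩ := geometric_hahn_banach_point_closed hHcv hHcl hout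
  set c := f (0, 1)
  have hf : ∀ x t, f (x, t) = f (x, 0) + t * c := by
    intro x t
    rw [← smul_eq_mul, ← map_smul, ← map_add, Prod.smul_mk, smul_zero, smul_eq_mul, mul_one,
      Prod.mk_add_mk, add_zero, zero_add]
  have hgraph : ∀ x : K, u < f (x, 0) + g x * c := fun x => by
    rw [← hf]; exact hfH _ ⟨(x, g x), le_refl (g x), rfl⟩
  have hc : c < 0 := by
    have := hgraph x₀
    rw [hf] at hfr
    nlinarith
  -- the separating hyperplane is not vertical, so it is the graph of a continuous affine map
  have hφ : ∀ x : E, (-c⁻¹ • f.comp (ContinuousLinearMap.inl ℝ E ℝ)) x + u / c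
      = (u - f (x, 0)) / c := fun x => by
    simp only [smul_apply, ContinuousLinearMap.comp_apply,
      ContinuousLinearMap.inl_apply, smul_eq_mul]
    ring
  refine ⟨-c⁻¹ • f.comp (ContinuousLinearMap.inl ℝ E ℝ), u / c, fun x => ?_, ?_⟩
  · rw [hφ, le_div_iff_of_neg hc]
    linarith [hgraph x]
  · rw [hφ, div_lt_iff_of_neg hc]
    linarith [hf x₀ r]

theorem exists_mem_extremePoints_isMax [T2Space E] (hKcp : IsCompact K) (hKne : K.Nonempty)
    {g : K → ℝ} (hg : IsAffineOn K g) (husc : UpperSemicontinuous g) :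
    ∃ z : K, (z : E) ∈ K.extremePoints ℝ ∧ ∀ x, g x ≤ g z := by
  have : CompactSpace K := isCompact_iff_compactSpace.1 hKcp
  have : Nonempty K := hKne.to_subtype
  obtain ⟨z₀, -, hz₀⟩ :=
    (husc.upperSemicontinuousOn univ).exists_isMaxOn univ_nonempty isCompact_univ
  have hmax : ∀ x, g x ≤ g z₀ := fun x => hz₀ (mem_univ x)
  have hFcp : IsCompact (Subtype.val '' (g ⁻¹' Ici (g z₀))) :=
    (husc.isClosed_preimage _).isCompact.image continuous_subtype_val
  obtain ⟨_, hzext⟩ := hFcp.extremePoints_nonempty ⟨z₀, z₀, le_refl (g z₀), rfl⟩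
  obtain ⟨z, hz, rfl⟩ := hzext.1
  exact ⟨z, (hg.isExtreme_image_preimage_Ici hmax).extremePoints_subset_extremePoints hzext,
    fun x => (hmax x).trans hz⟩

end IsAffineOn

theorem statement10
    {E : Type*}
    [AddCommGroup E] [Module ℝ E] [TopologicalSpace E] [IsTopologicalAddGroup E]
    [ContinuousSMul ℝ E] [T2Space E] [LocallyConvexSpace ℝ E]
    (K : Set E) (hKne : K.Nonempty) (hKcp : IsCompact K) (hKcv : Convex ℝ K)
    (h h' : K → ℝ) (hm : MemAusc K h) (hm' : MemAusc K h')
    (hbd : ∀ x : K, (x : E) ∈ K.extremePoints ℝ → h x ≤ h' x) :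
    ∀ x : K, h x ≤ h' x := by
  intro x₀
  by_contra! hlt
  obtain ⟨φ, c, hmaj, hx₀⟩ :=
    hm'.2.1.exists_dual_add_const_majorant_lt hKcp.isClosed hKcv hm'.1 x₀ hlt
  have husc : UpperSemicontinuous fun x : K => h x - (φ x + c) :=
    hm.1.add
      ((φ.continuous.comp continuous_subtype_val).add continuous_const).neg.upperSemicontinuous
  obtain ⟨z, hz, hmax⟩ :=
    (hm.2.1.sub_dual_add_const φ c).exists_mem_extremePoints_isMax hKcp hKne husc
  linarith [hmax x₀, hbd z hz, hmaj z]
end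
end

section
/- Let K be a nonempty compact convex set and let q ∈ A_lsc(K) be a normalized co-extremal vector, i.e. {f ∈ A_lsc(K) : f ≥ q pointwise} = {t·q : 1 ≤ t ≤ ∞} (with (∞·q)(x) = ∞ for all x since q > 0) and inf_{x ∈ K} q(x) = 1. Then there exists ψ ∈ ∂_e K such that q = I^∞_ψ, where I^∞_ψ(ψ) = 1 and I^∞_ψ(x) = ∞ for x ≠ ψ. -/
open Set
open scoped ENNReal Classical

noncomputable section

/-- `f : K → [0,∞]` is affine on `K` (with the convention `0 · ∞ = 0`). -/
def IsAffineOnE {E : Type*} [AddCommGroup E] [Module ℝ E] (K : Set E) (f : K → ℝ≥0∞) : Prop :=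
  ∀ (x y : K) (t : ℝ), 0 ≤ t → t ≤ 1 →
    ∀ h : t • (x : E) + (1 - t) • (y : E) ∈ K,
      f ⟨t • (x : E) + (1 - t) • (y : E), h⟩
        = ENNReal.ofReal t * f x + ENNReal.ofReal (1 - t) * f y

/-- Membership in `A_lsc(K)`: lower semicontinuous affine functions `K → (0,∞]`. -/
def MemAlsc {E : Type*} [AddCommGroup E] [Module ℝ E] [TopologicalSpace E]
    (K : Set E) (f : K → ℝ≥0∞) : Prop :=
  LowerSemicontinuous f ∧ IsAffineOnE K f ∧ ∀ x : K, 0 < f x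

/-- The function `I^∞_ψ`, equal to `1` at `ψ` and `∞` elsewhere. -/
def Iinf {E : Type*} [AddCommGroup E] [Module ℝ E]
    (K : Set E) (ψ : E) (hψ : ψ ∈ K) : K → ℝ≥0∞ :=
  fun x => if (x : E) = ψ then 1 else ∞

/-- `q` is a co-extremal vector of the cone `A_lsc(K)`. -/
def CoExtremalLsc {E : Type*} [AddCommGroup E] [Module ℝ E] [TopologicalSpace E]
    (K : Set E) (q : K → ℝ≥0∞) : Prop :=
  MemAlsc K q ∧
    {f : K → ℝ≥0∞ | MemAlsc K f ∧ q ≤ f}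
      = {f : K → ℝ≥0∞ | ∃ t : ℝ≥0∞, 1 ≤ t ∧ f = fun x => t * q x}

/-- The extended gauge `M(f,g) = inf {μ ∈ (0,∞] : f ≤ μ·g}`. -/
def MgaugeE {E : Type*} [AddCommGroup E] [Module ℝ E] {K : Set E}
    (f g : K → ℝ≥0∞) : ℝ≥0∞ :=
  sInf {m : ℝ≥0∞ | 0 < m ∧ ∀ x : K, f x ≤ m * g x}

/-!
For every lower semicontinuous affine `g : K → [0,∞]`, the function `q + g` lies in `A_lsc(K)`
above `q`, so co-extremality gives `q + g = t • q` for a scalar `t`. With `g = 1` this says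
`(t - 1) q = 1` wherever `q` is finite, so `q` has a single finite value, which the normalization
makes `1`. With `g = ℓ - min_K ℓ` for a continuous functional `ℓ` separating two points where `q`
is finite, `g` must agree at these points, so `q` is finite at exactly one point `ψ`. Finally `ψ`
is extreme because, `q` being affine, both ends of an open segment through `ψ` have finite `q`.
-/

section Affine

variable {E : Type*} [AddCommGroup E] [Module ℝ E] {K : Set E}

theorem ENNReal.ofReal_add_ofReal_one_sub {t : ℝ} (ht₀ : 0 ≤ t) (ht₁ : t ≤ 1) :
    ENNReal.ofReal t + ENNReal.ofReal (1 - t) = 1 := by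
  rw [← ENNReal.ofReal_add ht₀ (by linarith), add_sub_cancel, ENNReal.ofReal_one]

theorem IsAffineOnE.add {f g : K → ℝ≥0∞} (hf : IsAffineOnE K f) (hg : IsAffineOnE K g) :
    IsAffineOnE K (f + g) := by
  intro x y t ht₀ ht₁ h
  simp only [Pi.add_apply, hf x y t ht₀ ht₁ h, hg x y t ht₀ ht₁ h]
  ring

theorem isAffineOnE_const (c : ℝ≥0∞) : IsAffineOnE K fun _ => c := by
  intro x y t ht₀ ht₁ h
  rw [← add_mul, ENNReal.ofReal_add_ofReal_one_sub ht₀ ht₁, one_mul]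

theorem isAffineOnE_ofReal_sub (ℓ : E →ₗ[ℝ] ℝ) (c : ℝ) (hK : ∀ w ∈ K, c ≤ ℓ w) :
    IsAffineOnE K fun w => ENNReal.ofReal (ℓ w - c) := by
  intro x y t ht₀ ht₁ h
  have hx : 0 ≤ ℓ x - c := sub_nonneg.2 (hK x x.2)
  have hy : 0 ≤ ℓ y - c := sub_nonneg.2 (hK y y.2)
  have hcombo : ℓ (t • (x : E) + (1 - t) • (y : E)) - c
      = t * (ℓ x - c) + (1 - t) * (ℓ y - c) := by
    simp only [map_add, map_smul, smul_eq_mul]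
    ring
  dsimp only
  rw [hcombo, ENNReal.ofReal_add (mul_nonneg ht₀ hx) (mul_nonneg (sub_nonneg.2 ht₁) hy),
    ENNReal.ofReal_mul ht₀, ENNReal.ofReal_mul (sub_nonneg.2 ht₁)]

theorem IsAffineOnE.ne_top_of_mem_openSegment {f : K → ℝ≥0∞} (hf : IsAffineOnE K f)
    {x y : K} {z : E} (hz : z ∈ openSegment ℝ (x : E) y) (hzK : z ∈ K)
    (hfz : f ⟨z, hzK⟩ ≠ ⊤) : f x ≠ ⊤ ∧ f y ≠ ⊤ := by
  obtain ⟨a, b, ha, hb, hab, rfl⟩ := hz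
  obtain rfl : b = 1 - a := by linarith
  rw [hf x y a ha.le (by linarith) hzK] at hfz
  obtain ⟨hx, hy⟩ := ENNReal.add_ne_top.1 hfz
  exact ⟨fun h => hx (by rw [h, ENNReal.mul_top (ENNReal.ofReal_pos.2 ha).ne']),
    fun h => hy (by rw [h, ENNReal.mul_top (ENNReal.ofReal_pos.2 (by linarith)).ne'])⟩

end Affine

theorem exists_lowerSemicontinuous_isAffineOnE_separating {E : Type*} [AddCommGroup E]
    [Module ℝ E] [TopologicalSpace E] [IsTopologicalAddGroup E] [ContinuousSMul ℝ E]
    [T1Space E] [LocallyConvexSpace ℝ E] {K : Set E} (hK : IsCompact K) {x y : K}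
    (hxy : x ≠ y) :
    ∃ g : K → ℝ≥0∞, LowerSemicontinuous g ∧ IsAffineOnE K g ∧ g x ≠ g y := by
  obtain ⟨ℓ, hℓ⟩ := geometric_hahn_banach_point_point (Subtype.coe_ne_coe.2 hxy)
  obtain ⟨z, -, hz⟩ := hK.exists_isMinOn ⟨x, x.2⟩ ℓ.continuous.continuousOn
  refine ⟨fun w => ENNReal.ofReal (ℓ w - ℓ z), ?_, isAffineOnE_ofReal_sub ℓ.toLinearMap _ hz, ?_⟩
  · exact (ENNReal.continuous_ofReal.comp
      ((ℓ.continuous.comp continuous_subtype_val).sub continuous_const)).lowerSemicontinuous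
  · rw [Ne, ENNReal.ofReal_eq_ofReal_iff (sub_nonneg.2 (hz x.2)) (sub_nonneg.2 (hz y.2))]
    linarith

namespace CoExtremalLsc

variable {E : Type*} [AddCommGroup E] [Module ℝ E] [TopologicalSpace E] {K : Set E}
  {q : K → ℝ≥0∞}

theorem exists_add_eq_mul (hq : CoExtremalLsc K q) {g : K → ℝ≥0∞}
    (hg : LowerSemicontinuous g) (hg' : IsAffineOnE K g) :
    ∃ t : ℝ≥0∞, ∀ x, q x + g x = t * q x := by
  obtain ⟨⟨hq_lsc, hq_aff, hq_pos⟩, hcone⟩ := hq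
  have hmem : q + g ∈ {f : K → ℝ≥0∞ | MemAlsc K f ∧ q ≤ f} :=
    ⟨⟨hq_lsc.add hg, hq_aff.add hg', fun x => (hq_pos x).trans_le le_self_add⟩,
      fun x => le_self_add⟩
  rw [hcone] at hmem
  obtain ⟨t, -, ht⟩ := hmem
  exact ⟨t, congrFun ht⟩

theorem apply_eq_of_ne_top (hq : CoExtremalLsc K q) {x y : K} (hx : q x ≠ ⊤)
    (hy : q y ≠ ⊤) : q x = q y := by
  obtain ⟨t, ht⟩ := hq.exists_add_eq_mul lowerSemicontinuous_const (isAffineOnE_const 1)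
  have hreal : ∀ w, q w ≠ ⊤ → (q w).toReal + 1 = t.toReal * (q w).toReal := fun w hw => by
    rw [← ENNReal.toReal_one, ← ENNReal.toReal_add hw ENNReal.one_ne_top, ht w,
      ENNReal.toReal_mul]
  rw [← ENNReal.toReal_eq_toReal_iff' hx hy]
  linear_combination (q x).toReal * hreal y hy - (q y).toReal * hreal x hx

theorem apply_eq_iInf_of_ne_top (hq : CoExtremalLsc K q) {x : K} (hx : q x ≠ ⊤) :
    q x = ⨅ y, q y := by
  refine le_antisymm (le_iInf fun y => ?_) (iInf_le _ x)
  by_cases hy : q y = ⊤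
  · exact hy ▸ le_top
  · exact (hq.apply_eq_of_ne_top hx hy).le

theorem eq_of_ne_top [IsTopologicalAddGroup E] [ContinuousSMul ℝ E] [T1Space E]
    [LocallyConvexSpace ℝ E] (hK : IsCompact K) (hq : CoExtremalLsc K q) {x y : K}
    (hx : q x ≠ ⊤) (hy : q y ≠ ⊤) : x = y := by
  by_contra hxy
  obtain ⟨g, hg, hg', hgxy⟩ := exists_lowerSemicontinuous_isAffineOnE_separating hK hxy
  obtain ⟨t, ht⟩ := hq.exists_add_eq_mul hg hg'
  apply hgxy
  rw [← ENNReal.add_right_inj hx, ht x, hq.apply_eq_of_ne_top hx hy, ← ht y]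

end CoExtremalLsc

theorem statement13_general
    {E : Type*}
    [AddCommGroup E] [Module ℝ E] [TopologicalSpace E] [IsTopologicalAddGroup E]
    [ContinuousSMul ℝ E] [T2Space E] [LocallyConvexSpace ℝ E]
    (K : Set E) (hKcp : IsCompact K)
    (q : K → ℝ≥0∞) (hq : CoExtremalLsc K q)
    (hnorm : (⨅ x : K, q x) = 1) :
    ∃ (ψ : E) (hψ : ψ ∈ K.extremePoints ℝ),
      q = Iinf K ψ (extremePoints_subset hψ) := by
  obtain ⟨ψ, hψ⟩ : ∃ ψ, q ψ ≠ ⊤ := by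
    by_contra! h
    exact ENNReal.one_ne_top (hnorm ▸ iInf_eq_top.2 h)
  have huniq : ∀ x, q x ≠ ⊤ → x = ψ := fun x hx => hq.eq_of_ne_top hKcp hx hψ
  have hψ_one : q ψ = 1 := hnorm ▸ hq.apply_eq_iInf_of_ne_top hψ
  refine ⟨ψ, ⟨ψ.2, fun x hxK y hyK hψxy => ?_⟩, funext fun x => ?_⟩
  · have hq_aff : IsAffineOnE K q := hq.1.2.1
    have hfin := hq_aff.ne_top_of_mem_openSegment (x := ⟨x, hxK⟩) (y := ⟨y, hyK⟩) hψxy ψ.2 hψ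
    exact congrArg Subtype.val (huniq _ hfin.1)
  · by_cases hx : q x = ⊤
    · rw [hx, Iinf, if_neg fun h => hψ ((Subtype.ext h : x = ψ) ▸ hx)]
    · rw [huniq x hx, hψ_one, Iinf, if_pos rfl]

theorem statement13
    {E : Type*}
    [AddCommGroup E] [Module ℝ E] [TopologicalSpace E] [IsTopologicalAddGroup E]
    [ContinuousSMul ℝ E] [T2Space E] [LocallyConvexSpace ℝ E]
    (K : Set E) (hKne : K.Nonempty) (hKcp : IsCompact K) (hKcv : Convex ℝ K)
    (q : K → ℝ≥0∞) (hq : CoExtremalLsc K q)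
    (hnorm : (⨅ x : K, q x) = 1) :
    ∃ (ψ : E) (hψ : ψ ∈ K.extremePoints ℝ),
      q = Iinf K ψ (extremePoints_subset hψ) :=
  statement13_general K hKcp q hq hnorm
end
end
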